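/- The FIFO queue specification is closed under removing the witness pair in the Enq-Deq rule: if a differentiated history h is linearizable with respect to a sequential execution matching the rule 'Enq(x) first, Deq(x) before all other dequeues' with witness x, and the history h with all operations on x removed is linearizable with respect to the queue specification restricted to rules {R_0, R_Enq, R_EnqDeq}, then h itself is linearizable with respect to that restricted specification. -/

import Mathlib

/-!
Normalize the `dw{R_0, R_Enq, R_EnqDeq}`-linearization of `h` minus `x`: permute it, keeping it
in the specification and consistent with happens-before, so that every operation happening
before some `q` that follows no dequeue of the word is placed before all of its dequeues.
Rebuilding the word along its derivation preserves this invariant; at an `R_EnqDeq` step for `y`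
the interval-order axiom is what shows that nothing that must follow `Deq(y)` is placed before
something that must precede it. No dequeue of `h` precedes `Deq(x)`, so the normalized word
splits as `u1' · u2'` with `u1'` dequeue-free and containing every predecessor of `Deq(x)`, and
`Enq(x) · u1' · Deq(x) · u2'` is the required linearization of `h`.
-/

attribute [local instance] Classical.propDecidable

/-- Operations of a queue history: enqueues and dequeues of data values
(natural numbers), and empty-dequeues (tagged by an identifier). -/
inductive QOp : Type
  | enq (d : ℕ)
  | deq (d : ℕ)
  | deqEmpty (i : ℕ)
deriving DecidableEq

/-- A differentiated queue history: a finite set of operations (each operation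
occurs at most once, so each data value is used at most once) together with a
happens-before relation that is a strict interval order. -/
structure QHistory where
  ops : Finset QOp
  hb : QOp → QOp → Prop
  hb_irrefl : ∀ o, ¬ hb o o
  hb_trans : ∀ a b c, hb a b → hb b c → hb a c
  interval : ∀ a b c d, hb a b → hb c d → hb a d ∨ hb c b

/-- `u` is a linearization of the history `h`: it enumerates exactly the
operations of `h` in an order extending happens-before. -/
def QHistory.Linearizes (h : QHistory) (u : List QOp) : Prop :=
  u.Nodup ∧ (∀ o, o ∈ u ↔ o ∈ h.ops) ∧ u.Pairwise (fun a b => ¬ h.hb b a)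

/-- `h` is linearizable with respect to the set of sequential words `M`. -/
def LinearizableSet (h : QHistory) (M : List QOp → Prop) : Prop :=
  ∃ u, M u ∧ h.Linearizes u

def noDeq (u : List QOp) : Prop := ∀ d, QOp.deq d ∉ u

def noUnmatchedEnq (u : List QOp) : Prop := ∀ d, QOp.enq d ∈ u → QOp.deq d ∈ u

/-- Matching set of the rule R_EnqDeq with witness `x`:
words `Enq(x) · u1 · Deq(x) · u2` where `u1` contains no dequeue. -/
def MatchEnqDeqW (x : ℕ) (w : List QOp) : Prop :=
  ∃ u1 u2, w = QOp.enq x :: u1 ++ QOp.deq x :: u2 ∧ noDeq u1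

/-- Matching set of R_EnqDeq (some witness). -/
def MatchEnqDeq (w : List QOp) : Prop := ∃ x, MatchEnqDeqW x w

/-- Data values occurring in a history. -/
def QHistory.dom (h : QHistory) : Set ℕ :=
  {d | QOp.enq d ∈ h.ops ∨ QOp.deq d ∈ h.ops}

def QOp.keep (D K : Set ℕ) : QOp → Prop
  | .enq d => d ∈ D
  | .deq d => d ∈ D
  | .deqEmpty i => i ∈ K

/-- Projection of a history onto the data values in `D`, keeping the
empty-dequeue operations with identifiers in `K`. -/
noncomputable def QHistory.proj (h : QHistory) (D K : Set ℕ) : QHistory :=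
  { h with ops := h.ops.filter (QOp.keep D K) }

/-- Remove all operations on the data value `x`. -/
noncomputable def QHistory.removeVal (h : QHistory) (x : ℕ) : QHistory :=
  { h with ops := h.ops.filter (fun o => o ≠ QOp.enq x ∧ o ≠ QOp.deq x) }

/-- Data values occurring in a sequential word. -/
def wordVals (u : List QOp) : Set ℕ := {d | QOp.enq d ∈ u ∨ QOp.deq d ∈ u}

/-- The words derivable with the rules R_0, R_Enq, R_EnqDeq only. -/
inductive QueueED : List QOp → Prop
  | nil : QueueED []
  | enq (x : ℕ) (u1 u2 : List QOp) :
      QueueED (u1 ++ u2) → x ∉ wordVals (u1 ++ u2) →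
      QueueED (u1 ++ QOp.enq x :: u2)
  | enqdeq (x : ℕ) (u1 u2 : List QOp) :
      QueueED (u1 ++ u2) → noDeq u1 → x ∉ wordVals (u1 ++ u2) →
      QueueED (QOp.enq x :: u1 ++ QOp.deq x :: u2)

theorem List.exists_eq_append_of_pairwise {α : Type*} {L R : α → Prop} :
    ∀ {u : List α}, u.Pairwise (fun a b => R a → ¬ L b) → (∀ a ∈ u, R a → ¬ L a) →
      ∃ l r, u = l ++ r ∧ (∀ a ∈ l, ¬ R a) ∧ ∀ b ∈ r, ¬ L b
  | [], _, _ => ⟨[], [], rfl, by simp, by simp⟩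
  | a :: t, hpw, hdiag => by
    rw [List.pairwise_cons] at hpw
    by_cases ha : R a
    · refine ⟨[], a :: t, rfl, by simp, ?_⟩
      rintro b (_ | ⟨_, hb⟩)
      exacts [hdiag a List.mem_cons_self ha, hpw.1 b hb ha]
    · obtain ⟨l, r, rfl, hl, hr⟩ :=
        List.exists_eq_append_of_pairwise hpw.2 fun b hb => hdiag b (List.mem_cons_of_mem a hb)
      refine ⟨a :: l, r, rfl, ?_, hr⟩
      rintro b (_ | ⟨_, hb⟩)
      exacts [ha, hl b hb]

theorem List.Pairwise.append_cons {α : Type*} {P : α → α → Prop} {l r : List α} {a : α}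
    (hlr : (l ++ r).Pairwise P) (hl : ∀ b ∈ l, P b a) (hr : ∀ b ∈ r, P a b) :
    (l ++ a :: r).Pairwise P := by
  rw [List.pairwise_append] at hlr ⊢
  refine ⟨hlr.1, List.pairwise_cons.2 ⟨hr, hlr.2.1⟩, fun b hb c hc => ?_⟩
  rcases List.mem_cons.1 hc with rfl | hc
  exacts [hl b hb, hlr.2.2 b hb c hc]

def QOp.IsDeq (o : QOp) : Prop := ∃ d, o = .deq d

theorem QOp.not_isDeq_enq {y : ℕ} : ¬ (QOp.enq y).IsDeq := fun ⟨_, h⟩ => QOp.noConfusion h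

theorem wordVals_eq_of_perm {u v : List QOp} (huv : u.Perm v) : wordVals u = wordVals v := by
  ext d
  simp only [wordVals, Set.mem_ofPred_eq, huv.mem_iff]

namespace QHistory

variable (h : QHistory)

def Respects (u : List QOp) : Prop :=
  u.Pairwise fun a b => ¬ h.hb b a

def Early (u : List QOp) (p : QOp) : Prop :=
  ∃ q, h.hb p q ∧ ∀ d, QOp.deq d ∈ u → ¬ h.hb (QOp.deq d) q

def EarlyBeforeDeqs (u : List QOp) : Prop :=
  u.Pairwise fun a b => a.IsDeq → ¬ h.Early u b

def Normal (u : List QOp) : Prop :=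
  QueueED u ∧ h.Respects u ∧ h.EarlyBeforeDeqs u

variable {h}

theorem Early.of_hb {u : List QOp} {p p' : QOp} (hp : h.Early u p) (hp' : h.hb p' p) :
    h.Early u p' :=
  let ⟨q, hpq, hq⟩ := hp
  ⟨q, h.hb_trans _ _ _ hp' hpq, hq⟩

theorem Early.mono {u u' : List QOp} {p : QOp} (hp : h.Early u p) (hu : u' ⊆ u) :
    h.Early u' p :=
  let ⟨q, hpq, hq⟩ := hp
  ⟨q, hpq, fun d hd => hq d (hu hd)⟩

theorem not_early_of_isDeq {u : List QOp} {a : QOp} (ha : a.IsDeq) (hau : a ∈ u) :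
    ¬ h.Early u a := by
  obtain ⟨d, rfl⟩ := ha
  rintro ⟨q, hq, hnot⟩
  exact hnot d hau hq

theorem Respects.not_hb_enq {y : ℕ} {w1 w2 : List QOp}
    (hw : h.Respects (QOp.enq y :: w1 ++ QOp.deq y :: w2)) :
    ∀ o ∈ QOp.enq y :: w1 ++ QOp.deq y :: w2, ¬ h.hb o (QOp.enq y) := by
  rintro o (_ | ⟨_, ho⟩)
  exacts [h.hb_irrefl _, (List.pairwise_cons.1 hw).1 o ho]

theorem Respects.not_hb_deq {y : ℕ} {w1 w2 : List QOp}
    (hw : h.Respects (QOp.enq y :: w1 ++ QOp.deq y :: w2)) (hw1 : noDeq w1) :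
    ∀ d, QOp.deq d ∈ QOp.enq y :: w1 ++ QOp.deq y :: w2 →
      ¬ h.hb (QOp.deq d) (QOp.deq y) := by
  have hw2 := List.pairwise_cons.1 (List.pairwise_append.1 (List.pairwise_cons.1 hw).2).2.1
  intro d hd
  simp only [List.cons_append, List.mem_cons, List.mem_append, reduceCtorEq, false_or,
    QOp.deq.injEq] at hd
  rcases hd with hd | rfl | hd
  exacts [absurd hd (hw1 d), h.hb_irrefl _, hw2.1 _ hd]

theorem normal_enq {u₀ : List QOp} {y : ℕ} (hu₀ : h.Normal u₀) (hy : y ∉ wordVals u₀) :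
    ∃ u, u.Perm (QOp.enq y :: u₀) ∧ h.Normal u := by
  obtain ⟨hQ, hresp, hearly⟩ := hu₀
  obtain ⟨l, r, rfl, hl, hr⟩ := List.exists_eq_append_of_pairwise
      (R := fun a => h.hb (.enq y) a ∨ (a.IsDeq ∧ h.Early u₀ (.enq y)))
      (L := fun b => h.hb b (.enq y))
      ((hresp.and hearly).imp fun ⟨hba, hab⟩ hR hL => by
        rcases hR with hya | ⟨hdeq, hE⟩
        exacts [hba (h.hb_trans _ _ _ hL hya), hab hdeq (hE.of_hb hL)])
      (fun a ha hR hL => by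
        rcases hR with hya | ⟨hdeq, hE⟩
        exacts [h.hb_irrefl _ (h.hb_trans _ _ _ hL hya),
          not_early_of_isDeq hdeq ha (hE.of_hb hL)])
  have hsub : l ++ r ⊆ l ++ QOp.enq y :: r := fun o ho =>
    List.perm_middle.symm.subset (List.mem_cons_of_mem _ ho)
  refine ⟨l ++ QOp.enq y :: r, List.perm_middle, QueueED.enq y l r hQ hy, ?_, ?_⟩
  · exact hresp.append_cons (fun b hb hyb => hl b hb (Or.inl hyb)) hr
  · exact (hearly.imp fun hab hdeq hE => hab hdeq (hE.mono hsub)).append_cons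
      (fun b hb hdeq hE => hl b hb (Or.inr ⟨hdeq, hE.mono hsub⟩))
      (fun _ _ hdeq => (QOp.not_isDeq_enq hdeq).elim)

theorem normal_enqDeq {u₀ : List QOp} {y : ℕ} (hu₀ : h.Normal u₀) (hy : y ∉ wordVals u₀)
    (henq : ∀ o ∈ QOp.deq y :: u₀, ¬ h.hb o (QOp.enq y))
    (hdeq : ∀ d, QOp.deq d ∈ u₀ → ¬ h.hb (QOp.deq d) (QOp.deq y)) :
    ∃ u, u.Perm (QOp.enq y :: QOp.deq y :: u₀) ∧ h.Normal u := by
  obtain ⟨hQ, hresp, hearly⟩ := hu₀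
  have hdeq_early : ∀ b, h.hb b (QOp.deq y) → h.Early u₀ b := fun b hb => ⟨_, hb, hdeq⟩
  obtain ⟨l, r, rfl, hl, hr⟩ := List.exists_eq_append_of_pairwise
      (R := fun a => a.IsDeq ∨ h.hb (.deq y) a)
      (L := fun b => h.hb b (.deq y) ∨ h.Early (.deq y :: u₀) b)
      ((hresp.and hearly).imp fun ⟨hba, hab⟩ hR hL => by
        rcases hR, hL with ⟨hda | hya, hby | ⟨q, hbq, hq⟩⟩
        · exact hab hda (hdeq_early _ hby)
        · exact hab hda (Early.mono ⟨q, hbq, hq⟩ (List.subset_cons_self _ _))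
        · exact hba (h.hb_trans _ _ _ hby hya)
        · rcases h.interval _ _ _ _ hya hbq with hyq | hba'
          exacts [hq y List.mem_cons_self hyq, hba hba'])
      (fun a ha hR hL => by
        rcases hR, hL with ⟨hda | hya, hay | hE⟩
        · exact not_early_of_isDeq hda ha (hdeq_early _ hay)
        · exact not_early_of_isDeq hda (List.mem_cons_of_mem _ ha) hE
        · exact h.hb_irrefl _ (h.hb_trans _ _ _ hay hya)
        · exact not_early_of_isDeq ⟨y, rfl⟩ List.mem_cons_self (hE.of_hb hya))
  have hperm : (QOp.enq y :: l ++ QOp.deq y :: r).Perm (QOp.enq y :: QOp.deq y :: (l ++ r)) :=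
    List.perm_middle.cons _
  have hsub : QOp.deq y :: (l ++ r) ⊆ QOp.enq y :: l ++ QOp.deq y :: r := fun o ho =>
    hperm.symm.subset (List.mem_cons_of_mem _ ho)
  refine ⟨_, hperm, .enqdeq y l r hQ (fun d hd => hl _ hd (Or.inl ⟨d, rfl⟩)) hy, ?_, ?_⟩
  · refine List.pairwise_cons.2 ⟨fun o ho => henq o ?_, ?_⟩
    · exact List.perm_middle.subset ho
    · exact hresp.append_cons (fun b hb hyb => hl b hb (Or.inr hyb))
        (fun b hb hby => hr b hb (Or.inl hby))
  · refine List.pairwise_cons.2 ⟨fun _ _ hdeq => (QOp.not_isDeq_enq hdeq).elim, ?_⟩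
    have hsub₀ : l ++ r ⊆ QOp.enq y :: l ++ QOp.deq y :: r := fun _ ho =>
      hsub (List.mem_cons_of_mem _ ho)
    exact (hearly.imp fun hab hdeq hE => hab hdeq (hE.mono hsub₀)).append_cons
      (fun b hb hdeq _ => hl b hb (Or.inl hdeq))
      (fun b hb _ hE => hr b hb (Or.inr (hE.mono hsub)))

theorem exists_perm_normal {v : List QOp} (hv : QueueED v) (hresp : h.Respects v) :
    ∃ u, u.Perm v ∧ h.Normal u := by
  induction hv with
  | nil => exact ⟨[], .nil, .nil, .nil, .nil⟩
  | enq y w₁ w₂ _ hy ih =>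
    obtain ⟨u₀, hperm₀, hu₀⟩ :=
      ih (hresp.sublist ((List.sublist_cons_self _ _).append_left w₁))
    obtain ⟨u, hperm, hu⟩ := normal_enq hu₀ (by rwa [wordVals_eq_of_perm hperm₀])
    exact ⟨u, hperm.trans ((hperm₀.cons _).trans List.perm_middle.symm), hu⟩
  | enqdeq y w₁ w₂ _ hw₁ hy ih =>
    obtain ⟨u₀, hperm₀, hu₀⟩ := ih (hresp.sublist
      (((List.sublist_cons_self _ _).append_left w₁).cons _))
    have hperm_tail : (QOp.deq y :: u₀).Perm (w₁ ++ QOp.deq y :: w₂) :=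
      (hperm₀.cons _).trans List.perm_middle.symm
    have hmem : QOp.deq y :: u₀ ⊆ QOp.enq y :: w₁ ++ QOp.deq y :: w₂ := fun _ ho =>
      List.mem_cons_of_mem _ (hperm_tail.subset ho)
    obtain ⟨u, hperm, hu⟩ := normal_enqDeq hu₀ (by rwa [wordVals_eq_of_perm hperm₀])
      (fun o ho => hresp.not_hb_enq o (hmem ho))
      (fun d hd => hresp.not_hb_deq hw₁ d (hmem (List.mem_cons_of_mem _ hd)))
    exact ⟨u, hperm.trans (hperm_tail.cons _), hu⟩

theorem mem_removeVal_ops {x : ℕ} {o : QOp} :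
    o ∈ (h.removeVal x).ops ↔ o ∈ h.ops ∧ o ≠ QOp.enq x ∧ o ≠ QOp.deq x :=
  Finset.mem_filter

theorem Linearizes.of_perm {u v : List QOp} (hv : h.Linearizes v) (huv : u.Perm v)
    (hu : h.Respects u) : h.Linearizes u :=
  ⟨huv.nodup_iff.2 hv.1, fun o => huv.mem_iff.trans (hv.2.1 o), hu⟩

theorem Linearizes.of_perm_removeVal {x : ℕ} {u u₀ : List QOp}
    (hu₀ : (h.removeVal x).Linearizes u₀) (henq : QOp.enq x ∈ h.ops)
    (hdeq : QOp.deq x ∈ h.ops)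
    (hperm : u.Perm (QOp.enq x :: QOp.deq x :: u₀)) (hu : h.Respects u) : h.Linearizes u := by
  have hmem : ∀ o, o ∈ u₀ ↔ o ∈ h.ops ∧ o ≠ QOp.enq x ∧ o ≠ QOp.deq x := fun o =>
    (hu₀.2.1 o).trans mem_removeVal_ops
  refine ⟨hperm.nodup_iff.2 ?_, fun o => hperm.mem_iff.trans ?_, hu⟩
  · simp only [List.nodup_cons, List.mem_cons, hmem]
    simp [hu₀.1]
  · by_cases he : o = QOp.enq x
    · simp [he, henq]
    by_cases hd : o = QOp.deq x
    · simp [hd, hdeq]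
    simp [he, hd, hmem]

end QHistory

/-- queue step-by-step linearizability, Enq-Deq case: if the
differentiated history `h` is linearizable with respect to a word matching
R_EnqDeq with witness `x` (i.e. `Enq(x) · u1 · Deq(x) · u2` with no dequeue in
`u1`), and `h` minus all operations on `x` is linearizable with respect to
`dw{R_0, R_Enq, R_EnqDeq}`, then so is `h` itself. -/
theorem queue_sbs_enqdeq (h : QHistory) (x : ℕ) (u1 u2 : List QOp)
    (hlin : h.Linearizes (QOp.enq x :: u1 ++ QOp.deq x :: u2))
    (hnd : noDeq u1)
    (hrem : LinearizableSet (h.removeVal x) QueueED) :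
    LinearizableSet h QueueED := by
  set w := QOp.enq x :: u1 ++ QOp.deq x :: u2
  obtain ⟨v, hvQ, hv⟩ := hrem
  obtain ⟨u₀, hperm₀, hu₀⟩ := h.exists_perm_normal hvQ hv.2.2
  have hlin₀ : (h.removeVal x).Linearizes u₀ := hv.of_perm hperm₀ hu₀.2.1
  have hmem₀ : ∀ o ∈ u₀, o ∈ w := fun o ho =>
    (hlin.2.1 o).2 (QHistory.mem_removeVal_ops.1 ((hlin₀.2.1 o).1 ho)).1
  have hfresh : x ∉ wordVals u₀ := by
    rintro (hx | hx) <;> simpa using (QHistory.mem_removeVal_ops.1 ((hlin₀.2.1 _).1 hx)).2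
  have hdeq_w : QOp.deq x ∈ w := by simp [w]
  have hw : h.Respects w := hlin.2.2
  obtain ⟨u, hperm, hu⟩ := h.normal_enqDeq hu₀ hfresh
    (fun o ho => hw.not_hb_enq o ((List.cons_subset.2 ⟨hdeq_w, hmem₀⟩) ho))
    (fun d hd => hw.not_hb_deq hnd d (hmem₀ _ hd))
  exact ⟨u, hu.1, hlin₀.of_perm_removeVal ((hlin.2.1 _).1 List.mem_cons_self)
    ((hlin.2.1 _).1 hdeq_w) hperm hu.2.1⟩
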